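/- arXiv:2107.10362 — 3 statements merged into one kernel-verified Lean document; each statement's English description precedes it below -/
import Mathlib

section
/- Let n ≥ 3 and d ≥ 2, and let (x^1, …, x^n; C) be a hard ball evolution with n balls in ℝ^d satisfying the normalizations (A3) and (A4), and let t₀ be the unique time such that ⟨x(t), v(t+)⟩ < 0 for t < t₀ and ⟨x(t), v(t+)⟩ > 0 for t > t₀. Then: (i) there is a partition of {1, …, n} into two nonempty sets S and T such that no collision at a time t ∈ C with t ≥ t₀ + 100 n³ |x(t₀)| involves one ball with index in S and one ball with index in T; and (ii) there is a (possibly different) partition of {1, …, n} into two nonempty sets S′ and T′ such that no collision at a time t ∈ C with t ≤ t₀ − 100 n³ |x(t₀)| involves one ball with index in S′ and one ball with index in T′. -/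
/-- A hard ball evolution of `n` balls of radius 1 and equal mass in `ℝ^d`.
`x j` is the center of the `j`-th ball as a function of time, `C` is the set
of collision times, and `vL j t`, `vR j t` are the left and right velocities
`v^j(t−)`, `v^j(t+)`. -/
structure HardBallEvolution (n d : ℕ) where
  /-- centers of the balls -/
  x : Fin n → ℝ → EuclideanSpace ℝ (Fin d)
  /-- left velocities `v^j(t−)` -/
  vL : Fin n → ℝ → EuclideanSpace ℝ (Fin d)
  /-- right velocities `v^j(t+)` -/
  vR : Fin n → ℝ → EuclideanSpace ℝ (Fin d)
  /-- the set of collision times -/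
  C : Set ℝ
  closed_C : IsClosed C
  discrete_C : ∀ t ∈ C, ∃ ε > 0, ∀ s ∈ C, |s - t| < ε → s = t
  cont : ∀ j, Continuous (x j)
  /-- the balls never overlap -/
  noOverlap : ∀ j k, j ≠ k → ∀ t, 2 ≤ ‖x j t - x k t‖
  /-- `x j` is affine to the right of each time `t`, with slope `vR j t` -/
  affineR : ∀ j t, ∃ ε > 0, ∀ s, t ≤ s → s < t + ε → x j s = x j t + (s - t) • vR j t
  /-- `x j` is affine to the left of each time `t`, with slope `vL j t` -/
  affineL : ∀ j t, ∃ ε > 0, ∀ s, t - ε < s → s ≤ t → x j s = x j t + (s - t) • vL j t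
  /-- velocities change only at collision times -/
  noKink : ∀ j, ∀ t, t ∉ C → vR j t = vL j t
  /-- at each collision time there is exactly one touching pair `j ≠ k` with
  `‖x j t - x k t‖ = 2`; the velocities of this pair are transformed by the
  elastic collision law with `u = (x j t - x k t)/‖x j t - x k t‖`, while all
  other velocities are unchanged -/
  collision : ∀ t ∈ C, ∃ j k : Fin n, j ≠ k ∧ ‖x j t - x k t‖ = 2 ∧
    (∀ j' k' : Fin n, j' ≠ k' → ‖x j' t - x k' t‖ = 2 →
      (j' = j ∧ k' = k) ∨ (j' = k ∧ k' = j)) ∧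
    (inner ℝ (vL j t - vL k t) (‖x j t - x k t‖⁻¹ • (x j t - x k t)) : ℝ) < 0 ∧
    vR j t = vL j t +
      (inner ℝ (vL k t - vL j t) (‖x j t - x k t‖⁻¹ • (x j t - x k t)) : ℝ) •
        (‖x j t - x k t‖⁻¹ • (x j t - x k t)) ∧
    vR k t = vL k t +
      (inner ℝ (vL j t - vL k t) (‖x j t - x k t‖⁻¹ • (x j t - x k t)) : ℝ) •
        (‖x j t - x k t‖⁻¹ • (x j t - x k t)) ∧
    ∀ i, i ≠ j → i ≠ k → vR i t = vL i t

namespace HardBallEvolution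

variable {n d : ℕ}

/-- The collision at time `t ∈ C` involves balls `j` and `k`. -/
def involves (E : HardBallEvolution n d) (t : ℝ) (j k : Fin n) : Prop :=
  t ∈ E.C ∧ j ≠ k ∧ ‖E.x j t - E.x k t‖ = 2

/-- `|x(t)|`, the Euclidean norm of the configuration vector in `ℝ^{dn}`. -/
noncomputable def xnorm (E : HardBallEvolution n d) (t : ℝ) : ℝ :=
  Real.sqrt (∑ j, ‖E.x j t‖ ^ 2)

/-- `⟨x(t), v(t+)⟩`, the Euclidean inner product in `ℝ^{dn}`. -/
noncomputable def xvInner (E : HardBallEvolution n d) (t : ℝ) : ℝ :=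
  ∑ j, (inner ℝ (E.x j t) (E.vR j t) : ℝ)

/-- Normalization (A3): total momentum zero and center of mass at the origin. -/
def A3 (E : HardBallEvolution n d) : Prop :=
  (∀ t : ℝ, ∑ j, E.x j t = 0) ∧ (∀ t : ℝ, ∑ j, E.vR j t = 0)

/-- Normalization (A4): total kinetic energy equal to 1. -/
def A4 (E : HardBallEvolution n d) : Prop :=
  ∀ t : ℝ, ∑ j, ‖E.vR j t‖ ^ 2 = 1

end HardBallEvolution

/-!
Write `f(t) = ⟨x(t), v(t+)⟩` and `J(t) = |x(t)|² - f(t)²`, the squared distance from `x(t)` to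
the line `ℝ v(t+)`. Between collisions `f` grows at rate `|v|² = 1` and `J` is constant; at a
collision `f` jumps up, so `J` drops as long as `f ≥ 0`. Hence `f(t) ≥ t - t₀` and
`J(t) ≤ |x(t₀)|² =: R²` for `t ≥ t₀`. The rescaled configuration `y(t) = x(t) / f(t)` moves no
faster than the potential `R / f + 2 J / D²` decreases once `f ≥ D ≥ R`, so after
`t₀ + D` with `D = 100 n³ R` it moves by at most `3 / (200 n³)`. The balls of
`y(t₀ + D)` have mean zero and total squared norm at least one, so by pigeonhole they split
into two groups more than `1 / (20 n³)` apart; two colliding balls are at rescaled distance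
`2 / f(t) ≤ 2 / (100 n³)`, so no collision between the groups can happen after `t₀ + D`.
Reversing time gives the statement before `t₀ - D`.
-/

open Set Filter Topology
open scoped RealInnerProductSpace

lemma hasDerivAt_affine {F : Type*} [NormedAddCommGroup F] [NormedSpace ℝ F]
    (a v : F) (t₀ t : ℝ) : HasDerivAt (fun s => a + (s - t₀) • v) v t := by
  simpa using (((hasDerivAt_id t).sub_const t₀).smul_const v).const_add a

lemma eqOn_Ico_of_eventually_eq {F : Type*} [NormedAddCommGroup F] [NormedSpace ℝ F]
    {f : ℝ → F} {p q : ℝ} (hp : ∀ᶠ s in 𝓝[≥] p, f s = f p)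
    (hloc : ∀ r ∈ Ioo p q, ∀ᶠ s in 𝓝 r, f s = f r) : ∀ s ∈ Ico p q, f s = f p := by
  intro s hs
  refine constant_of_has_deriv_right_zero (fun r hr => ?_) (fun r hr => ?_) s ⟨hs.1, le_rfl⟩
  · rcases hr.1.eq_or_lt with rfl | hpr
    · exact continuousWithinAt_const.congr_of_eventuallyEq
        (nhdsWithin_mono _ Icc_subset_Ici_self hp) rfl
    · exact (continuousAt_const.congr_of_eventuallyEq
        (hloc r ⟨hpr, hr.2.trans_lt hs.2⟩)).continuousWithinAt
  · have hr' : ∀ᶠ t in 𝓝[≥] r, f t = f r := by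
      rcases hr.1.eq_or_lt with rfl | hpr
      · exact hp
      · exact nhdsWithin_le_nhds (hloc r ⟨hpr, hr.2.trans hs.2⟩)
    exact (hasDerivWithinAt_const r _ (f r)).congr_of_eventuallyEq hr' rfl

lemma PiLp.norm_apply_sub_apply_le {p : ENNReal} [Fact (1 ≤ p)] {ι F : Type*} [Fintype ι]
    [NormedAddCommGroup F] (z w : PiLp p fun _ : ι => F) (j k : ι) :
    ‖z k - z j‖ ≤ ‖w k - w j‖ + 2 * ‖z - w‖ := by
  have hk : ‖z k - w k‖ ≤ ‖z - w‖ := PiLp.norm_apply_le (z - w) k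
  have hj : ‖w j - z j‖ ≤ ‖z - w‖ := norm_sub_rev w z ▸ PiLp.norm_apply_le (w - z) j
  linarith [norm_sub_le_norm_sub_add_norm_sub (z k) (w k) (z j),
    norm_sub_le_norm_sub_add_norm_sub (w k) (w j) (z j)]

lemma exists_gap_level {ι : Type*} [Fintype ι] (r : ι → ℝ) {δ : ℝ} (hδ : 0 < δ)
    {i₀ i₁ : ι} (h : r i₀ + ((Fintype.card ι : ℝ) - 1) * δ < r i₁) :
    ∃ m : ℕ, 1 ≤ m ∧ r i₀ + m * δ < r i₁ ∧
      ∀ i, ¬ (r i₀ + ((m : ℝ) - 1) * δ < r i ∧ r i ≤ r i₀ + m * δ) := by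
  classical
  set n := Fintype.card ι
  have hn : 1 ≤ n := Fintype.card_pos_iff.2 ⟨i₀⟩
  have hne : i₁ ≠ i₀ := by
    rintro rfl
    nlinarith [(Nat.one_le_cast (α := ℝ)).2 hn]
  -- `g i = m` iff `r i` lies in the bucket `(r i₀ + (m - 1) δ, r i₀ + m δ]`
  let g : ι → ℕ := fun i => ⌈(r i - r i₀) / δ⌉₊
  have hg₁ : n ≤ g i₁ := by
    have : ((n - 1 : ℕ) : ℝ) < (r i₁ - r i₀) / δ := by
      rw [Nat.cast_pred hn, lt_div_iff₀ hδ]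
      linarith
    have := Nat.lt_ceil.2 this
    simp only [g]
    omega
  have hcard : ((Finset.univ.erase i₀).erase i₁).card = n - 2 := by
    rw [Finset.card_erase_of_mem (Finset.mem_erase.2 ⟨hne, Finset.mem_univ _⟩),
      Finset.card_erase_of_mem (Finset.mem_univ _), Finset.card_univ]
    rfl
  obtain ⟨m, hm, hmg⟩ := Finset.exists_mem_notMem_of_card_lt_card
    (s := ((Finset.univ.erase i₀).erase i₁).image g) (t := Finset.Icc 1 (n - 1)) <| by
      refine Finset.card_image_le.trans_lt ?_
      have : 2 ≤ n := by
        simpa [Finset.card_pair hne] using Finset.card_le_univ ({i₁, i₀} : Finset ι)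
      rw [hcard, Nat.card_Icc]
      omega
  rw [Finset.mem_Icc] at hm
  have hgm : ∀ i, g i ≠ m := by
    intro i hi
    by_cases h₀ : i = i₀
    · simp only [h₀, g, sub_self, zero_div, Nat.ceil_zero] at hi
      omega
    by_cases h₁ : i = i₁
    · subst h₁
      omega
    exact hmg (hi ▸ Finset.mem_image_of_mem g
      (Finset.mem_erase.2 ⟨h₁, Finset.mem_erase.2 ⟨h₀, Finset.mem_univ _⟩⟩))
  have hmn : (m : ℝ) ≤ n - 1 := by
    rw [← Nat.cast_one, ← Nat.cast_sub hn]
    exact Nat.cast_le.2 hm.2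
  refine ⟨m, hm.1, by nlinarith, fun i ⟨hlo, hhi⟩ => hgm i ((Nat.ceil_eq_iff (by omega)).2 ?_)⟩
  rw [Nat.cast_pred hm.1, lt_div_iff₀ hδ, div_le_iff₀ hδ]
  constructor <;> linarith

theorem exists_partition_gap {ι : Type*} [Fintype ι] (r : ι → ℝ) {δ : ℝ} (hδ : 0 < δ)
    {i₀ i₁ : ι} (h : r i₀ + ((Fintype.card ι : ℝ) - 1) * δ < r i₁) :
    ∃ S T : Set ι, S.Nonempty ∧ T.Nonempty ∧ S ∪ T = univ ∧ S ∩ T = ∅ ∧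
      ∀ j ∈ S, ∀ k ∈ T, r j + δ < r k := by
  obtain ⟨m, hm, hm₁, hgap⟩ := exists_gap_level r hδ h
  have hm' : (1 : ℝ) ≤ m := Nat.one_le_cast.2 hm
  refine ⟨{i | r i ≤ r i₀ + ((m : ℝ) - 1) * δ}, {i | r i₀ + m * δ < r i},
    ⟨i₀, by simp only [mem_ofPred_eq]; nlinarith⟩, ⟨i₁, hm₁⟩,
    eq_univ_of_forall fun i => ?_, eq_empty_of_forall_notMem fun i ⟨hS, hT⟩ => ?_,
    fun j hj k hk => ?_⟩
  · by_contra hi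
    simp only [mem_union, mem_ofPred_eq, not_or, not_le, not_lt] at hi
    exact hgap i hi
  · simp only [mem_ofPred_eq] at hS hT
    linarith
  · simp only [mem_ofPred_eq] at hj hk
    linarith

theorem exists_partition_separated {ι F : Type*} [Fintype ι] [NormedAddCommGroup F]
    [NormedSpace ℝ F] (Y : ι → F) (hY : ∑ i, Y i = 0) (hY₁ : 1 ≤ ∑ i, ‖Y i‖ ^ 2) {δ : ℝ}
    (hδ : 0 < δ) (hδn : (Fintype.card ι : ℝ) ^ 2 * δ ≤ 1) :
    ∃ S T : Set ι, S.Nonempty ∧ T.Nonempty ∧ S ∪ T = univ ∧ S ∩ T = ∅ ∧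
      ∀ j ∈ S, ∀ k ∈ T, δ < ‖Y k - Y j‖ := by
  set n := Fintype.card ι
  have hι : (Finset.univ : Finset ι).Nonempty := by
    by_contra h
    norm_num [Finset.not_nonempty_iff_eq_empty.1 h] at hY₁
  have hn : (1 : ℝ) ≤ n := Nat.one_le_cast.2 (Finset.card_pos.2 hι)
  obtain ⟨i₀, -, hi₀⟩ := Finset.exists_le_of_sum_le hι
    (f := fun _ => 1 / (n : ℝ)) (g := fun i => ‖Y i‖ ^ 2) <| by
      rwa [Finset.sum_const, Finset.card_univ, nsmul_eq_mul, mul_one_div_cancel (by positivity)]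
  have hY₀ : 1 / (n : ℝ) ≤ ‖Y i₀‖ := by
    refine (pow_le_pow_iff_left₀ (by positivity) (norm_nonneg _) two_ne_zero).1 (le_trans ?_ hi₀)
    rw [div_pow, one_pow, one_div_le_one_div (by positivity) (by positivity)]
    nlinarith
  -- the `Y i₀ - Y k` average to `Y i₀`
  obtain ⟨i₁, -, hi₁⟩ := Finset.exists_le_of_sum_le hι
    (f := fun _ => ‖Y i₀‖) (g := fun k => ‖Y i₀ - Y k‖) <| by
      have hsum : ∑ k, (Y i₀ - Y k) = (n : ℝ) • Y i₀ := by
        rw [Finset.sum_sub_distrib, hY, sub_zero, Finset.sum_const, Finset.card_univ,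
          Nat.cast_smul_eq_nsmul]
      have := norm_sum_le Finset.univ fun k => Y i₀ - Y k
      rw [hsum, norm_smul, Real.norm_eq_abs, abs_of_pos (by positivity)] at this
      simpa [n] using this
  obtain ⟨S, T, hS, hT, hST, hST', hgap⟩ :=
    exists_partition_gap (fun k => ‖Y k - Y i₀‖) hδ (i₀ := i₀) (i₁ := i₁) <| by
      have : ((n : ℝ) - 1) * δ < 1 / n := by
        rw [lt_div_iff₀ (by positivity)]
        nlinarith
      simp only [sub_self, norm_zero, zero_add]
      rw [norm_sub_rev]
      linarith
  refine ⟨S, T, hS, hT, hST, hST', fun j hj k hk => ?_⟩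
  have := norm_sub_norm_le (Y k - Y i₀) (Y j - Y i₀)
  rw [sub_sub_sub_cancel_right] at this
  linarith [hgap j hj k hk]

lemma inner_sub_eq_neg_of_elastic {V : Type*} [NormedAddCommGroup V] [InnerProductSpace ℝ V]
    {u a b a' b' : V} (hu : ‖u‖ = 1) (ha : a' = a + ⟪b - a, u⟫ • u)
    (hb : b' = b + ⟪a - b, u⟫ • u) : ⟪a' - b', u⟫ = -⟪a - b, u⟫ := by
  rw [ha, hb]
  simp only [inner_add_left, inner_sub_left, real_inner_smul_left, real_inner_self_eq_norm_sq, hu]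
  ring

namespace HardBallEvolution

variable {n d : ℕ} (E : HardBallEvolution n d)

lemma hasDerivWithinAt_vR (j : Fin n) (t : ℝ) :
    HasDerivWithinAt (E.x j) (E.vR j t) (Ici t) t := by
  obtain ⟨ε, hε, h⟩ := E.affineR j t
  refine (hasDerivAt_affine (E.x j t) (E.vR j t) t t).hasDerivWithinAt.congr_of_eventuallyEq
    ?_ (by simp)
  filter_upwards [Ico_mem_nhdsGE (by linarith : t < t + ε)] with s hs using h s hs.1 hs.2

lemma hasDerivWithinAt_vL (j : Fin n) (t : ℝ) :
    HasDerivWithinAt (E.x j) (E.vL j t) (Iic t) t := by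
  obtain ⟨ε, hε, h⟩ := E.affineL j t
  refine (hasDerivAt_affine (E.x j t) (E.vL j t) t t).hasDerivWithinAt.congr_of_eventuallyEq
    ?_ (by simp)
  filter_upwards [Ioc_mem_nhdsLE (by linarith : t - ε < t)] with s hs using h s hs.1 hs.2

lemma vR_eq_of_eqOn_affine {j : Fin n} {t s : ℝ} {v : EuclideanSpace ℝ (Fin d)} {U : Set ℝ}
    (hU : IsOpen U) (hs : s ∈ U) (h : ∀ r ∈ U, E.x j r = E.x j t + (r - t) • v) :
    E.vR j s = v :=
  (uniqueDiffWithinAt_Ici s).eq_deriv _ (E.hasDerivWithinAt_vR j s)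
    ((hasDerivAt_affine _ _ t s).congr_of_eventuallyEq
      (eventually_of_mem (hU.mem_nhds hs) h)).hasDerivWithinAt

lemma eventually_vR_eq_nhdsGE (j : Fin n) (t : ℝ) : ∀ᶠ s in 𝓝[≥] t, E.vR j s = E.vR j t := by
  obtain ⟨ε, hε, h⟩ := E.affineR j t
  filter_upwards [Ico_mem_nhdsGE (by linarith : t < t + ε)] with s hs
  rcases hs.1.eq_or_lt with rfl | hts
  · rfl
  exact E.vR_eq_of_eqOn_affine isOpen_Ioo ⟨hts, hs.2⟩ fun r hr => h r hr.1.le hr.2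

lemma eventually_vR_eq_nhds {t : ℝ} (ht : t ∉ E.C) (j : Fin n) :
    ∀ᶠ s in 𝓝 t, E.vR j s = E.vR j t := by
  rw [← nhdsLT_sup_nhdsGE, eventually_sup]
  refine ⟨?_, E.eventually_vR_eq_nhdsGE j t⟩
  obtain ⟨ε, hε, h⟩ := E.affineL j t
  filter_upwards [Ioo_mem_nhdsLT (by linarith : t - ε < t)] with s hs
  rw [E.noKink j t ht]
  exact E.vR_eq_of_eqOn_affine isOpen_Ioo hs fun r hr => h r hr.1 hr.2.le

lemma free_flight {p q : ℝ} (hpq : p < q) (hfree : ∀ s ∈ Ioo p q, s ∉ E.C) (j : Fin n) :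
    E.x j q = E.x j p + (q - p) • E.vR j p ∧ E.vL j q = E.vR j p := by
  have hvR : ∀ s ∈ Ico p q, E.vR j s = E.vR j p := eqOn_Ico_of_eventually_eq
    (E.eventually_vR_eq_nhdsGE j p) fun r hr => E.eventually_vR_eq_nhds (hfree r hr) j
  have hline : ∀ s ∈ Icc p q, E.x j s = E.x j p + (s - p) • E.vR j p :=
    eq_of_has_deriv_right_eq (fun r hr => hvR r hr ▸ E.hasDerivWithinAt_vR j r)
      (fun r _ => (hasDerivAt_affine _ _ p r).hasDerivWithinAt) (E.cont j).continuousOn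
      (fun r _ => (hasDerivAt_affine _ _ p r).continuousAt.continuousWithinAt) (by simp)
  refine ⟨hline q ⟨hpq.le, le_rfl⟩, (uniqueDiffWithinAt_Iic q).eq_deriv _
    (E.hasDerivWithinAt_vL j q) ?_⟩
  exact (hasDerivAt_affine _ _ p q).hasDerivWithinAt.congr_of_eventuallyEq
    (eventually_of_mem (Icc_mem_nhdsLE hpq) hline) (hline q ⟨hpq.le, le_rfl⟩)

lemma eventually_notMem_C (t : ℝ) : ∀ᶠ s in 𝓝[≠] t, s ∉ E.C := by
  by_cases ht : t ∈ E.C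
  · obtain ⟨ε, hε, h⟩ := E.discrete_C t ht
    filter_upwards [self_mem_nhdsWithin, nhdsWithin_le_nhds (Metric.ball_mem_nhds t hε)]
      with s hne hs hsC
    exact hne (h s hsC (Real.dist_eq s t ▸ hs))
  · exact nhdsWithin_le_nhds (E.closed_C.isOpen_compl.mem_nhds ht)

lemma finite_C_inter_Icc (a b : ℝ) : (E.C ∩ Icc a b).Finite :=
  (isCompact_Icc.inter_left E.closed_C).finite <| isDiscrete_iff_nhdsNE.2 fun t _ =>
    inf_principal_eq_bot.2 <| mem_of_superset (E.eventually_notMem_C t) fun _ hs h => hs h.1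

theorem interval_induction {P : ℝ → ℝ → Prop}
    (free : ∀ s t, s < t → (∀ σ ∈ Ioo s t, σ ∉ E.C) → P s t)
    (trans : ∀ s τ t, s < τ → τ < t → P s τ → P τ t → P s t) :
    ∀ s t, s < t → P s t := by
  suffices ∀ m s t, (E.C ∩ Ioo s t).ncard = m → s < t → P s t from
    fun s t => this _ s t rfl
  intro m
  induction m using Nat.strong_induction_on with
  | _ m ih =>
    intro s t hm hst
    by_cases hfree : ∀ σ ∈ Ioo s t, σ ∉ E.C
    · exact free s t hst hfree
    push Not at hfree
    obtain ⟨τ, hτ, hτC⟩ := hfree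
    have hfin : (E.C ∩ Ioo s t).Finite :=
      (E.finite_C_inter_Icc s t).subset (inter_subset_inter_right _ Ioo_subset_Icc_self)
    have hsplit : ∀ a b, Ioo a b ⊆ Ioo s t → τ ∉ Ioo a b → (E.C ∩ Ioo a b).ncard < m :=
      fun a b hab hτab => hm ▸ Set.ncard_lt_ncard (ssubset_of_subset_not_subset
        (inter_subset_inter_right _ hab) fun h => hτab (h ⟨hτC, hτ⟩).2) hfin
    exact trans s τ t hτ.1 hτ.2
      (ih _ (hsplit s τ (Ioo_subset_Ioo_right hτ.2.le) fun h => h.2.false) s τ rfl hτ.1)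
      (ih _ (hsplit τ t (Ioo_subset_Ioo_left hτ.1.le) fun h => h.1.false) τ t rfl hτ.2)

lemma exists_vL_eq_vR (t : ℝ) : ∃ s < t, ∀ j, E.vL j t = E.vR j s := by
  obtain ⟨s, hs, hfree⟩ := mem_nhdsLT_iff_exists_Ioo_subset.1 <|
    nhdsWithin_mono t (fun _ h => ne_of_lt h) (E.eventually_notMem_C t)
  exact ⟨s, hs, fun j => (E.free_flight hs hfree j).2⟩

abbrev Config (n d : ℕ) := PiLp 2 fun _ : Fin n => EuclideanSpace ℝ (Fin d)

noncomputable def conf (t : ℝ) : Config n d := WithLp.toLp 2 fun j => E.x j t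

noncomputable def vel (t : ℝ) : Config n d := WithLp.toLp 2 fun j => E.vR j t

noncomputable def velL (t : ℝ) : Config n d := WithLp.toLp 2 fun j => E.vL j t

noncomputable def xvInnerL (t : ℝ) : ℝ := ⟪E.conf t, E.velL t⟫

/-- The squared impact parameter: for `|v(t+)| = 1`, the squared distance from `x(t)` to the
line `ℝ v(t+)`. -/
noncomputable def impactSq (t : ℝ) : ℝ := ‖E.conf t‖ ^ 2 - E.xvInner t ^ 2

noncomputable def impactSqL (t : ℝ) : ℝ := ‖E.conf t‖ ^ 2 - E.xvInnerL t ^ 2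

noncomputable def rescaled (t : ℝ) : Config n d := (E.xvInner t)⁻¹ • E.conf t

noncomputable def rescaledL (t : ℝ) : Config n d := (E.xvInnerL t)⁻¹ • E.conf t

noncomputable def driftPotential (R D t : ℝ) : ℝ :=
  R * (E.xvInner t)⁻¹ + 2 / D ^ 2 * E.impactSq t

lemma xvInner_eq_inner (t : ℝ) : E.xvInner t = ⟪E.conf t, E.vel t⟫ :=
  (PiLp.inner_apply (E.conf t) (E.vel t)).symm

lemma xnorm_eq_norm_conf (t : ℝ) : E.xnorm t = ‖E.conf t‖ := by
  rw [xnorm, ← Real.sqrt_sq (norm_nonneg (E.conf t)), PiLp.norm_sq_eq_of_L2]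
  rfl

lemma velL_eq_vel {t : ℝ} (ht : t ∉ E.C) : E.velL t = E.vel t :=
  congrArg (WithLp.toLp 2) (funext fun j => (E.noKink j t ht).symm)

lemma conf_free_flight {p q : ℝ} (hpq : p < q) (hfree : ∀ s ∈ Ioo p q, s ∉ E.C) :
    E.conf q = E.conf p + (q - p) • E.vel p ∧ E.velL q = E.vel p :=
  ⟨congrArg (WithLp.toLp 2) (funext fun j => (E.free_flight hpq hfree j).1),
    congrArg (WithLp.toLp 2) (funext fun j => (E.free_flight hpq hfree j).2)⟩

lemma rescaled_apply (t : ℝ) (j : Fin n) : E.rescaled t j = (E.xvInner t)⁻¹ • E.x j t := rfl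

variable {E}

lemma norm_vel (hA4 : E.A4) (t : ℝ) : ‖E.vel t‖ = 1 := by
  refine (pow_eq_one_iff_of_nonneg (norm_nonneg _) two_ne_zero).1 ?_
  rw [PiLp.norm_sq_eq_of_L2]
  exact hA4 t

lemma xvInnerL_eq_xvInner {t : ℝ} (ht : t ∉ E.C) : E.xvInnerL t = E.xvInner t := by
  rw [xvInner_eq_inner, xvInnerL, E.velL_eq_vel ht]

lemma xvInner_le_norm_conf (hA4 : E.A4) (t : ℝ) : E.xvInner t ≤ ‖E.conf t‖ := by
  simpa [xvInner_eq_inner, norm_vel hA4] using real_inner_le_norm (E.conf t) (E.vel t)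

lemma norm_conf_sub_sq (hA4 : E.A4) (t : ℝ) :
    ‖E.conf t - E.xvInner t • E.vel t‖ ^ 2 = E.impactSq t := by
  rw [norm_sub_sq_real, real_inner_smul_right, norm_smul, mul_pow, norm_vel hA4,
    ← xvInner_eq_inner, impactSq, Real.norm_eq_abs, sq_abs]
  ring

lemma impactSq_nonneg (hA4 : E.A4) (t : ℝ) : 0 ≤ E.impactSq t :=
  norm_conf_sub_sq hA4 t ▸ sq_nonneg _

lemma norm_conf_sub_le (hA4 : E.A4) {t R : ℝ} (hR : 0 ≤ R) (hJ : E.impactSq t ≤ R ^ 2) :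
    ‖E.conf t - E.xvInner t • E.vel t‖ ≤ R :=
  (pow_le_pow_iff_left₀ (norm_nonneg _) hR two_ne_zero).1 (norm_conf_sub_sq hA4 t ▸ hJ)

lemma one_le_norm_conf (hn : 2 ≤ n) (t : ℝ) : 1 ≤ ‖E.conf t‖ := by
  let i₀ : Fin n := ⟨0, by omega⟩
  let i₁ : Fin n := ⟨1, by omega⟩
  have h₀ : ‖E.x i₀ t‖ ≤ ‖E.conf t‖ := PiLp.norm_apply_le (E.conf t) i₀
  have h₁ : ‖E.x i₁ t‖ ≤ ‖E.conf t‖ := PiLp.norm_apply_le (E.conf t) i₁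
  linarith [E.noOverlap i₀ i₁ (by simp [i₀, i₁]) t, norm_sub_le (E.x i₀ t) (E.x i₁ t)]

lemma free_flight_xvInner (hA4 : E.A4) {p q : ℝ} (hpq : p < q)
    (hfree : ∀ s ∈ Ioo p q, s ∉ E.C) :
    E.xvInnerL q = E.xvInner p + (q - p) ∧ E.impactSqL q = E.impactSq p := by
  obtain ⟨hx, hv⟩ := E.conf_free_flight hpq hfree
  have hf : E.xvInnerL q = E.xvInner p + (q - p) := by
    rw [xvInnerL, hx, hv, inner_add_left, real_inner_smul_left, real_inner_self_eq_norm_sq,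
      norm_vel hA4, xvInner_eq_inner]
    ring
  refine ⟨hf, ?_⟩
  rw [impactSqL, impactSq, hf, hx, norm_add_sq_real, real_inner_smul_right, norm_smul,
    mul_pow, norm_vel hA4, ← xvInner_eq_inner, Real.norm_eq_abs, sq_abs]
  ring

lemma xvInner_sub_xvInnerL (t : ℝ) :
    E.xvInner t - E.xvInnerL t = ∑ i, ⟪E.x i t, E.vR i t - E.vL i t⟫ := by
  simp only [xvInner, xvInnerL, PiLp.inner_apply, inner_sub_right, Finset.sum_sub_distrib]
  rfl

lemma xvInnerL_le_xvInner (t : ℝ) : E.xvInnerL t ≤ E.xvInner t := by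
  by_cases ht : t ∉ E.C
  · exact (xvInnerL_eq_xvInner ht).le
  rw [not_not] at ht
  obtain ⟨j, k, hjk, hdist, -, hneg, hvj, hvk, hvi⟩ := E.collision t ht
  set w := E.x j t - E.x k t
  set u := ‖w‖⁻¹ • w
  have hwu : ⟪E.x j t, u⟫ - ⟪E.x k t, u⟫ = ‖w‖ := by
    rw [← inner_sub_left]
    change ⟪w, ‖w‖⁻¹ • w⟫ = ‖w‖
    rw [real_inner_smul_right, real_inner_self_eq_norm_sq, hdist]
    norm_num
  have hc : ⟪E.vL j t - E.vL k t, u⟫ = -⟪E.vL k t - E.vL j t, u⟫ := by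
    rw [← inner_neg_left, neg_sub]
  have hsum : E.xvInner t - E.xvInnerL t = ⟪E.vL k t - E.vL j t, u⟫ * ‖w‖ := by
    rw [xvInner_sub_xvInnerL, Finset.sum_eq_add_of_mem j k (Finset.mem_univ j)
      (Finset.mem_univ k) hjk fun i _ hi => by rw [hvi i hi.1 hi.2, sub_self, inner_zero_right],
      hvj, hvk, hc, ← hwu]
    simp only [add_sub_cancel_left, real_inner_smul_right]
    ring
  nlinarith [norm_nonneg w]

lemma impactSq_le_impactSqL {t : ℝ} (ht : 0 ≤ E.xvInnerL t) : E.impactSq t ≤ E.impactSqL t := by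
  have := xvInnerL_le_xvInner (E := E) t
  rw [impactSq, impactSqL]
  nlinarith


lemma xvInner_add_le (hA4 : E.A4) {s t : ℝ} (hst : s ≤ t) :
    E.xvInner s + (t - s) ≤ E.xvInner t := by
  rcases hst.eq_or_lt with rfl | hst
  · simp
  refine E.interval_induction (P := fun s t => E.xvInner s + (t - s) ≤ E.xvInner t)
    (fun s t hst hfree => ?_) (fun s τ t _ _ h₁ h₂ => by linarith) s t hst
  linarith [(free_flight_xvInner hA4 hst hfree).1, xvInnerL_le_xvInner (E := E) t]

lemma impactSq_le_of_nonneg (hA4 : E.A4) {s t : ℝ} (hs : 0 ≤ E.xvInner s) (hst : s ≤ t) :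
    E.impactSq t ≤ E.impactSq s := by
  rcases hst.eq_or_lt with rfl | hst
  · rfl
  refine E.interval_induction (P := fun s t => 0 ≤ E.xvInner s → E.impactSq t ≤ E.impactSq s)
    (fun s t hst hfree hs => ?_) (fun s τ t hsτ _ h₁ h₂ hs => (h₂ ?_).trans (h₁ hs)) s t hst hs
  · obtain ⟨hf, hJ⟩ := free_flight_xvInner hA4 hst hfree
    exact (impactSq_le_impactSqL (by rw [hf]; linarith)).trans hJ.le
  · linarith [xvInner_add_le hA4 hsτ.le]

lemma xvInner_nonneg_of_pos (hA4 : E.A4) {t₀ : ℝ} (h : ∀ t > t₀, 0 < E.xvInner t) :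
    0 ≤ E.xvInner t₀ := by
  obtain ⟨q, hq, hfree⟩ := mem_nhdsGT_iff_exists_Ioo_subset.1 <|
    nhdsWithin_mono t₀ (fun _ h => ne_of_gt h) (E.eventually_notMem_C t₀)
  have hpos : ∀ s ∈ Ioo t₀ q, 0 < E.xvInner t₀ + (s - t₀) := fun s hs => by
    rw [← (free_flight_xvInner hA4 hs.1 fun σ hσ => hfree ⟨hσ.1, hσ.2.trans hs.2⟩).1,
      xvInnerL_eq_xvInner (hfree hs)]
    exact h s hs.1
  have hlim : Tendsto (fun s => E.xvInner t₀ + (s - t₀)) (𝓝[>] t₀) (𝓝 (E.xvInner t₀)) := by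
    refine tendsto_nhdsWithin_of_tendsto_nhds ?_
    simpa using ((continuous_sub_right t₀).const_add (E.xvInner t₀)).tendsto t₀
  exact ge_of_tendsto hlim (eventually_of_mem (Ioo_mem_nhdsGT hq) fun s hs => (hpos s hs).le)

lemma norm_rescaledL_sub_rescaled_le (hA4 : E.A4) {p q R : ℝ} (hpq : p < q)
    (hfree : ∀ s ∈ Ioo p q, s ∉ E.C) (hp : 0 < E.xvInner p) (hR : 0 ≤ R)
    (hJ : E.impactSq p ≤ R ^ 2) :
    ‖E.rescaledL q - E.rescaled p‖ ≤ R * ((E.xvInner p)⁻¹ - (E.xvInnerL q)⁻¹) := by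
  obtain ⟨hx, -⟩ := E.conf_free_flight hpq hfree
  have hf := (free_flight_xvInner hA4 hpq hfree).1
  have hnorm := norm_conf_sub_le hA4 hR hJ
  rw [rescaledL, rescaled, hx, hf]
  generalize E.xvInner p = a at hp hnorm ⊢
  have hb : 0 < a + (q - p) := by linarith
  have hc : 0 ≤ (q - p) / (a * (a + (q - p))) := by positivity
  have hdiff : (a + (q - p))⁻¹ • (E.conf p + (q - p) • E.vel p) - a⁻¹ • E.conf p
      = -((q - p) / (a * (a + (q - p)))) • (E.conf p - a • E.vel p) := by
    match_scalars
    · field_simp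
      ring
    · field_simp
  calc ‖(a + (q - p))⁻¹ • (E.conf p + (q - p) • E.vel p) - a⁻¹ • E.conf p‖
      ≤ (q - p) / (a * (a + (q - p))) * R := by
        rw [hdiff, norm_smul, norm_neg, Real.norm_eq_abs, abs_of_nonneg hc]
        exact mul_le_mul_of_nonneg_left hnorm hc
    _ = R * (a⁻¹ - (a + (q - p))⁻¹) := by
        field_simp
        ring

lemma norm_rescaled_sub_rescaledL_le {t D : ℝ} (hD : 0 < D) (hDt : D ≤ E.xvInnerL t)
    (hJ : E.impactSqL t ≤ D ^ 2) :
    ‖E.rescaled t - E.rescaledL t‖ ≤ 2 / D ^ 2 * (E.impactSqL t - E.impactSq t) := by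
  set a := E.xvInnerL t
  set b := E.xvInner t
  have hab : a ≤ b := xvInnerL_le_xvInner t
  have ha : 0 < a := hD.trans_le hDt
  have hb : 0 < b := ha.trans_le hab
  have hx : ‖E.conf t‖ ≤ 2 * a := by
    rw [impactSqL] at hJ
    nlinarith [norm_nonneg (E.conf t)]
  have hdiff : E.rescaled t - E.rescaledL t = -(a⁻¹ - b⁻¹) • E.conf t := by
    rw [rescaled, rescaledL, neg_sub, sub_smul]
  have hc : 0 ≤ a⁻¹ - b⁻¹ := sub_nonneg.2 (inv_anti₀ ha hab)
  calc ‖E.rescaled t - E.rescaledL t‖ ≤ (a⁻¹ - b⁻¹) * (2 * a) := by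
        rw [hdiff, norm_smul, norm_neg, Real.norm_eq_abs, abs_of_nonneg hc]
        exact mul_le_mul_of_nonneg_left hx hc
    _ = 2 * (b - a) * b⁻¹ := by field_simp
    _ ≤ 2 * (b - a) * ((b + a) / D ^ 2) := by
        refine mul_le_mul_of_nonneg_left ?_ (by linarith)
        rw [inv_eq_one_div, div_le_div_iff₀ hb (by positivity)]
        nlinarith
    _ = 2 / D ^ 2 * (E.impactSqL t - E.impactSq t) := by
        rw [impactSqL, impactSq]
        ring

section Drift

variable (hA4 : E.A4) {R D : ℝ} (hR : 0 ≤ R) (hRD : R ≤ D) (hD : 0 < D)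
include hA4 hR hRD hD

lemma norm_rescaled_sub_le_of_free {p t : ℝ} (hpt : p < t) (hfree : ∀ s ∈ Ioo p t, s ∉ E.C)
    (hp : D ≤ E.xvInner p) (hJ : E.impactSq p ≤ R ^ 2) :
    ‖E.rescaled t - E.rescaled p‖ ≤ E.driftPotential R D p - E.driftPotential R D t := by
  obtain ⟨hf, hJL⟩ := free_flight_xvInner hA4 hpt hfree
  have hDt : D ≤ E.xvInnerL t := by linarith
  have h₁ := norm_rescaledL_sub_rescaled_le hA4 hpt hfree (hD.trans_le hp) hR hJ
  have h₂ := norm_rescaled_sub_rescaledL_le hD hDt (hJL ▸ hJ.trans (pow_le_pow_left₀ hR hRD 2))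
  have h₃ : R * (E.xvInner t)⁻¹ ≤ R * (E.xvInnerL t)⁻¹ :=
    mul_le_mul_of_nonneg_left (inv_anti₀ (hD.trans_le hDt) (xvInnerL_le_xvInner t)) hR
  rw [hJL] at h₂
  rw [driftPotential, driftPotential]
  linarith [norm_sub_le_norm_sub_add_norm_sub (E.rescaled t) (E.rescaledL t) (E.rescaled p)]

lemma norm_rescaled_sub_le {s t : ℝ} (hst : s ≤ t) (hs : D ≤ E.xvInner s)
    (hJ : E.impactSq s ≤ R ^ 2) :
    ‖E.rescaled t - E.rescaled s‖ ≤ E.driftPotential R D s - E.driftPotential R D t := by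
  rcases hst.eq_or_lt with rfl | hst
  · simp
  refine E.interval_induction (P := fun s t => D ≤ E.xvInner s → E.impactSq s ≤ R ^ 2 →
      ‖E.rescaled t - E.rescaled s‖ ≤ E.driftPotential R D s - E.driftPotential R D t)
    (fun s t hst hfree => norm_rescaled_sub_le_of_free hA4 hR hRD hD hst hfree)
    (fun s τ t hsτ _ h₁ h₂ hs hJ => ?_) s t hst hs hJ
  have hτ : D ≤ E.xvInner τ := by linarith [xvInner_add_le hA4 hsτ.le]
  have hJτ := impactSq_le_of_nonneg hA4 (hD.le.trans hs) hsτ.le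
  linarith [h₁ hs hJ, h₂ hτ (hJτ.trans hJ),
    norm_sub_le_norm_sub_add_norm_sub (E.rescaled t) (E.rescaled τ) (E.rescaled s)]

end Drift

lemma norm_rescaled_sub_rescaled_le (hA4 : E.A4) {t₀ D t : ℝ} (ht₀ : 0 ≤ E.xvInner t₀)
    (hRD : ‖E.conf t₀‖ ≤ D) (hD : 0 < D) (ht : t₀ + D ≤ t) :
    ‖E.rescaled t - E.rescaled (t₀ + D)‖ ≤ ‖E.conf t₀‖ / D + 2 * ‖E.conf t₀‖ ^ 2 / D ^ 2 := by
  set R := ‖E.conf t₀‖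
  have hf : ∀ s, t₀ + D ≤ s → D ≤ E.xvInner s := fun s hs => by
    linarith [xvInner_add_le hA4 (by linarith : t₀ ≤ s)]
  have hJ : E.impactSq (t₀ + D) ≤ R ^ 2 :=
    (impactSq_le_of_nonneg hA4 ht₀ (by linarith)).trans (by rw [impactSq]; nlinarith)
  refine (norm_rescaled_sub_le hA4 (norm_nonneg _) hRD hD ht (hf _ le_rfl) hJ).trans ?_
  have h₁ : R * (E.xvInner (t₀ + D))⁻¹ ≤ R / D :=
    mul_le_mul_of_nonneg_left (inv_anti₀ hD (hf _ le_rfl)) (norm_nonneg _)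
  have h₂ : 0 ≤ E.driftPotential R D t := by
    have := hD.trans_le (hf t ht)
    have := impactSq_nonneg hA4 t
    unfold driftPotential
    positivity
  have h₃ : 2 / D ^ 2 * E.impactSq (t₀ + D) ≤ 2 * R ^ 2 / D ^ 2 := by
    rw [mul_comm, ← mul_div_assoc, mul_comm]
    gcongr
  unfold driftPotential at h₂ ⊢
  linarith

lemma norm_rescaled_apply_sub_of_involves {t : ℝ} {j k : Fin n} (h : E.involves t j k)
    (ht : 0 < E.xvInner t) : ‖E.rescaled t j - E.rescaled t k‖ = 2 / E.xvInner t := by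
  rw [rescaled_apply, rescaled_apply, ← smul_sub, norm_smul, h.2.2, Real.norm_eq_abs,
    abs_inv, abs_of_pos ht, inv_mul_eq_div]

lemma sum_rescaled_apply (hA3 : E.A3) (t : ℝ) : ∑ j, E.rescaled t j = 0 := by
  simp only [rescaled_apply, ← Finset.smul_sum, hA3.1 t, smul_zero]

lemma one_le_sum_norm_rescaled_apply_sq (hA4 : E.A4) {t : ℝ} (ht : 0 < E.xvInner t) :
    1 ≤ ∑ j, ‖E.rescaled t j‖ ^ 2 := by
  rw [← PiLp.norm_sq_eq_of_L2, rescaled, norm_smul, Real.norm_eq_abs, abs_inv, abs_of_pos ht,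
    inv_mul_eq_div]
  have : 1 ≤ ‖E.conf t‖ / E.xvInner t := by
    rw [le_div_iff₀ ht, one_mul]
    exact xvInner_le_norm_conf hA4 t
  nlinarith


def SplitsOn (E : HardBallEvolution n d) (I : Set ℝ) : Prop :=
  ∃ S T : Set (Fin n), S.Nonempty ∧ T.Nonempty ∧ S ∪ T = Set.univ ∧ S ∩ T = ∅ ∧
    ∀ t ∈ E.C, t ∈ I → ∀ j ∈ S, ∀ k ∈ T, ¬ E.involves t j k

theorem splitsOn_Ici (hn : 2 ≤ n) (hA3 : E.A3) (hA4 : E.A4) {t₀ : ℝ}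
    (ht₀ : 0 ≤ E.xvInner t₀) : E.SplitsOn (Ici (t₀ + 100 * (n : ℝ) ^ 3 * E.xnorm t₀)) := by
  rw [xnorm_eq_norm_conf]
  set R := ‖E.conf t₀‖
  set β : ℝ := (100 * (n : ℝ) ^ 3)⁻¹
  set D := 100 * (n : ℝ) ^ 3 * R
  have hR : 1 ≤ R := one_le_norm_conf hn t₀
  have hn1 : (1 : ℝ) ≤ n := by exact_mod_cast (by omega : 1 ≤ n)
  have hn3 : 1 ≤ (n : ℝ) ^ 3 := one_le_pow₀ hn1
  have hβ : 0 < β := by positivity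
  have hβ1 : β ≤ 1 / 100 := by
    rw [inv_le_comm₀ (by positivity) (by norm_num)]
    linarith
  have hD : 0 < D := by positivity
  have hRD : R / D = β := by
    simp only [D, β]
    field_simp
  have hf : ∀ t, t₀ + D ≤ t → D ≤ E.xvInner t := fun t ht => by
    linarith [xvInner_add_le hA4 (by linarith : t₀ ≤ t)]
  have hdrift : ∀ t, t₀ + D ≤ t → ‖E.rescaled t - E.rescaled (t₀ + D)‖ ≤ 3 / 2 * β :=
    fun t ht => (norm_rescaled_sub_rescaled_le hA4 ht₀ (by nlinarith) hD ht).trans <| by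
      rw [show 2 * R ^ 2 / D ^ 2 = 2 * (R / D) ^ 2 by ring, hRD]
      nlinarith
  obtain ⟨S, T, hS, hT, hST, hST', hgap⟩ := exists_partition_separated
    (fun j => E.rescaled (t₀ + D) j) (sum_rescaled_apply hA3 _)
    (one_le_sum_norm_rescaled_apply_sq hA4 (hD.trans_le (hf _ le_rfl))) (δ := 5 * β)
    (by positivity) (by simp only [Fintype.card_fin, β]; field_simp; nlinarith)
  refine ⟨S, T, hS, hT, hST, hST', fun t _ ht j hj k hk hjk => ?_⟩
  have hcol : ‖E.rescaled t j - E.rescaled t k‖ ≤ 2 * β := by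
    rw [norm_rescaled_apply_sub_of_involves hjk (hD.trans_le (hf t ht)), ← hRD, mul_div_assoc']
    calc 2 / E.xvInner t ≤ 2 / D := div_le_div_of_nonneg_left (by norm_num) hD (hf t ht)
      _ ≤ 2 * R / D := div_le_div_of_nonneg_right (by linarith) hD.le
  have := PiLp.norm_apply_sub_apply_le (E.rescaled (t₀ + D)) (E.rescaled t) j k
  rw [norm_sub_rev (E.rescaled t k), norm_sub_rev (E.rescaled (t₀ + D))] at this
  linarith [hgap j hj k hk, hdrift t ht]

noncomputable def reverse (E : HardBallEvolution n d) : HardBallEvolution n d where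
  x j t := E.x j (-t)
  vL j t := -E.vR j (-t)
  vR j t := -E.vL j (-t)
  C := {t | -t ∈ E.C}
  closed_C := E.closed_C.preimage continuous_neg
  discrete_C t ht := by
    obtain ⟨ε, hε, h⟩ := E.discrete_C (-t) ht
    refine ⟨ε, hε, fun s hs hst => neg_injective (h (-s) hs ?_)⟩
    rwa [neg_sub_neg, abs_sub_comm]
  cont j := (E.cont j).comp continuous_neg
  noOverlap j k hjk t := E.noOverlap j k hjk (-t)
  affineR j t := by
    obtain ⟨ε, hε, h⟩ := E.affineL j (-t)
    refine ⟨ε, hε, fun s hts hst => ?_⟩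
    rw [h (-s) (by linarith) (by linarith)]
    module
  affineL j t := by
    obtain ⟨ε, hε, h⟩ := E.affineR j (-t)
    refine ⟨ε, hε, fun s hts hst => ?_⟩
    rw [h (-s) (by linarith) (by linarith)]
    module
  noKink j t ht := by rw [E.noKink j (-t) ht]
  collision t ht := by
    obtain ⟨j, k, hjk, hdist, huniq, hneg, hvj, hvk, hvi⟩ := E.collision (-t) ht
    set u := ‖E.x j (-t) - E.x k (-t)‖⁻¹ • (E.x j (-t) - E.x k (-t))
    have hu : ‖u‖ = 1 := norm_smul_inv_norm (by rw [← norm_ne_zero_iff, hdist]; norm_num)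
    have hflip := inner_sub_eq_neg_of_elastic hu hvj hvk
    have hswap : ⟪E.vL k (-t) - E.vL j (-t), u⟫ = -⟪E.vL j (-t) - E.vL k (-t), u⟫ := by
      rw [← inner_neg_left, neg_sub]
    refine ⟨j, k, hjk, hdist, huniq, ?_, ?_, ?_, fun i hij hik => by rw [hvi i hij hik]⟩
    · show ⟪-E.vR j (-t) - -E.vR k (-t), u⟫ < 0
      rw [neg_sub_neg, ← neg_sub, inner_neg_left, hflip, neg_neg]
      exact hneg
    · show -E.vL j (-t) = -E.vR j (-t) + ⟪-E.vR k (-t) - -E.vR j (-t), u⟫ • u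
      rw [neg_sub_neg, hflip, hvj, hswap]
      module
    · show -E.vL k (-t) = -E.vR k (-t) + ⟪-E.vR j (-t) - -E.vR k (-t), u⟫ • u
      rw [neg_sub_neg, ← neg_sub, inner_neg_left, hflip, hvk, neg_neg]
      module

lemma sum_vL (hA3 : E.A3) (t : ℝ) : ∑ j, E.vL j t = 0 := by
  obtain ⟨s, -, hs⟩ := E.exists_vL_eq_vR t
  simp only [hs, hA3.2 s]

lemma sum_norm_vL_sq (hA4 : E.A4) (t : ℝ) : ∑ j, ‖E.vL j t‖ ^ 2 = 1 := by
  obtain ⟨s, -, hs⟩ := E.exists_vL_eq_vR t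
  simp only [hs, hA4 s]

lemma reverse_A3 (hA3 : E.A3) : E.reverse.A3 :=
  ⟨fun t => hA3.1 (-t), fun t => by
    simp only [reverse, Finset.sum_neg_distrib, sum_vL hA3, neg_zero]⟩

lemma reverse_A4 (hA4 : E.A4) : E.reverse.A4 := fun t => by
  simp only [reverse, norm_neg, sum_norm_vL_sq hA4]

lemma reverse_xvInner (t : ℝ) : E.reverse.xvInner t = -E.xvInnerL (-t) := by
  simp only [xvInner, xvInnerL, reverse, inner_neg_right, Finset.sum_neg_distrib,
    PiLp.inner_apply]
  rfl

lemma reverse_xnorm (t : ℝ) : E.reverse.xnorm t = E.xnorm (-t) := rfl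

lemma SplitsOn.of_reverse {a : ℝ} (h : E.reverse.SplitsOn (Ici a)) : E.SplitsOn (Iic (-a)) := by
  obtain ⟨S, T, hS, hT, hST, hST', hsplit⟩ := h
  refine ⟨S, T, hS, hT, hST, hST', fun t ht hta j hj k hk hjk => ?_⟩
  have ht' : -t ∈ E.reverse.C := by simpa [reverse] using ht
  exact hsplit (-t) ht' (mem_Ici.2 (le_neg_of_le_neg (mem_Iic.1 hta))) j hj k hk
    ⟨ht', hjk.2.1, by simpa [reverse] using hjk.2.2⟩

end HardBallEvolution

open HardBallEvolution in
theorem splitting_after_t0_general (n d : ℕ) (hn : 3 ≤ n)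
    (E : HardBallEvolution n d) (hA3 : E.A3) (hA4 : E.A4) (t₀ : ℝ)
    (ht₀neg : ∀ t < t₀, E.xvInner t < 0) (ht₀pos : ∀ t > t₀, 0 < E.xvInner t) :
    (∃ S T : Set (Fin n), S.Nonempty ∧ T.Nonempty ∧ S ∪ T = Set.univ ∧ S ∩ T = ∅ ∧
      ∀ t ∈ E.C, t₀ + 100 * (n : ℝ) ^ 3 * E.xnorm t₀ ≤ t →
        ∀ j ∈ S, ∀ k ∈ T, ¬ E.involves t j k) ∧
    (∃ S' T' : Set (Fin n), S'.Nonempty ∧ T'.Nonempty ∧ S' ∪ T' = Set.univ ∧ S' ∩ T' = ∅ ∧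
      ∀ t ∈ E.C, t ≤ t₀ - 100 * (n : ℝ) ^ 3 * E.xnorm t₀ →
        ∀ j ∈ S', ∀ k ∈ T', ¬ E.involves t j k) := by
  have hn2 : 2 ≤ n := by omega
  have hrev : ∀ u > -t₀, 0 < E.reverse.xvInner u := fun u hu => by
    rw [reverse_xvInner]
    linarith [xvInnerL_le_xvInner (E := E) (-u), ht₀neg (-u) (by linarith)]
  have hback := (splitsOn_Ici hn2 (reverse_A3 hA3) (reverse_A4 hA4)
    (xvInner_nonneg_of_pos (reverse_A4 hA4) hrev)).of_reverse
  rw [reverse_xnorm, neg_neg, neg_add', neg_neg] at hback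
  exact ⟨splitsOn_Ici hn2 hA3 hA4 (xvInner_nonneg_of_pos hA4 ht₀pos), hback⟩

/-- **Theorem 5.1 of [BuD18b].** Under (A3) and (A4), with `t₀` the unique time
at which `⟨x(t), v(t+)⟩` changes sign, the family of `n` balls splits into two
non-empty non-interacting subfamilies on `[t₀ + 100 n³ |x(t₀)|, ∞)`, and
similarly on `(-∞, t₀ − 100 n³ |x(t₀)|]`. -/
theorem splitting_after_t0 (n d : ℕ) (hn : 3 ≤ n) (hd : 2 ≤ d)
    (E : HardBallEvolution n d) (hA3 : E.A3) (hA4 : E.A4) (t₀ : ℝ)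
    (ht₀neg : ∀ t < t₀, E.xvInner t < 0) (ht₀pos : ∀ t > t₀, 0 < E.xvInner t) :
    (∃ S T : Set (Fin n), S.Nonempty ∧ T.Nonempty ∧ S ∪ T = Set.univ ∧ S ∩ T = ∅ ∧
      ∀ t ∈ E.C, t₀ + 100 * (n : ℝ) ^ 3 * E.xnorm t₀ ≤ t →
        ∀ j ∈ S, ∀ k ∈ T, ¬ E.involves t j k) ∧
    (∃ S' T' : Set (Fin n), S'.Nonempty ∧ T'.Nonempty ∧ S' ∪ T' = Set.univ ∧ S' ∩ T' = ∅ ∧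
      ∀ t ∈ E.C, t ≤ t₀ - 100 * (n : ℝ) ^ 3 * E.xnorm t₀ →
        ∀ j ∈ S', ∀ k ∈ T', ¬ E.involves t j k) :=
  splitting_after_t0_general n d hn E hA3 hA4 t₀ ht₀neg ht₀pos
end

section
/- Let d ≥ 1 and n ≥ 1, let u ∈ ℝ, and let x^1, …, x^n : [u, u+1] → ℝ^d be 1-Lipschitz functions such that |x^j(t) − x^k(t)| ≥ 2 for all j ≠ k and all t ∈ [u, u+1]. Then for every fixed index j, the set {k ≠ j : there exists t ∈ [u, u+1] with |x^j(t) − x^k(t)| = 2} has cardinality at most 5^d. -/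
/-! Two centres moving at speed at most 1 approach each other at speed at most 2, so every ball
that touches the `j`-th one during the unit time interval has its centre within distance 4 of
`x j u` at the initial time `u`. These centres are `2`-separated, so after rescaling by `1/2` they
form a `1`-separated set in a ball of radius `2`, which has at most `5 ^ d` points by the volume
argument of `Besicovitch.card_le_of_separated`. -/

open Module

theorem norm_sub_le_norm_sub_add_two_mul {E : Type*} [SeminormedAddCommGroup E] {x y : ℝ → E}
    {s t : ℝ} (hx : ‖x s - x t‖ ≤ |s - t|) (hy : ‖y t - y s‖ ≤ |t - s|) :
    ‖x s - y s‖ ≤ ‖x t - y t‖ + 2 * |s - t| :=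
  calc ‖x s - y s‖ = ‖(x s - x t) + (x t - y t) + (y t - y s)‖ := by congr 1; abel
    _ ≤ ‖x s - x t‖ + ‖x t - y t‖ + ‖y t - y s‖ := norm_add₃_le
    _ ≤ ‖x t - y t‖ + 2 * |s - t| := by linarith [abs_sub_comm s t]

theorem card_le_five_pow_finrank_of_separated {E ι : Type*} [NormedAddCommGroup E]
    [NormedSpace ℝ E] [FiniteDimensional ℝ E] (s : Finset ι) (c : ι → E) (a : E) {r : ℝ}
    (hr : 0 < r) (hc : ∀ i ∈ s, ‖c i - a‖ ≤ 2 * r)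
    (hsep : ∀ i ∈ s, ∀ k ∈ s, i ≠ k → r ≤ ‖c i - c k‖) :
    s.card ≤ 5 ^ finrank ℝ E := by
  classical
  set rescale : ι → E := fun i => r⁻¹ • (c i - a)
  have norm_rescale_sub (i k : ι) : ‖rescale i - rescale k‖ = r⁻¹ * ‖c i - c k‖ := by
    show ‖r⁻¹ • (c i - a) - r⁻¹ • (c k - a)‖ = _
    rw [← smul_sub, sub_sub_sub_cancel_right, norm_smul, norm_inv, Real.norm_of_nonneg hr.le]
  have hinj : Set.InjOn rescale s := by
    intro i hi k hk hik
    by_contra hne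
    have hfar := hsep i hi k hk hne
    have hzero := norm_rescale_sub i k
    rw [hik, sub_self, norm_zero, eq_comm, mul_eq_zero] at hzero
    exact hzero.elim (inv_ne_zero hr.ne') fun h => by linarith
  rw [← Finset.card_image_of_injOn hinj]
  refine Besicovitch.card_le_of_separated _ ?_ ?_
  · simp only [Finset.mem_image]
    rintro _ ⟨i, hi, rfl⟩
    rw [norm_smul, norm_inv, Real.norm_of_nonneg hr.le, inv_mul_le_iff₀ hr]
    linarith [hc i hi]
  · simp only [Finset.mem_image]
    rintro _ ⟨i, hi, rfl⟩ _ ⟨k, hk, rfl⟩ hne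
    rw [norm_rescale_sub, le_inv_mul_iff₀ hr, mul_one]
    exact hsep i hi k hk (ne_of_apply_ne rescale hne)

theorem touching_balls_in_unit_time_general (d n : ℕ) (u : ℝ)
    (x : Fin n → ℝ → EuclideanSpace ℝ (Fin d))
    (hlip : ∀ j, ∀ s ∈ Set.Icc u (u + 1), ∀ t ∈ Set.Icc u (u + 1),
      ‖x j s - x j t‖ ≤ |s - t|)
    (hsep : ∀ j k, j ≠ k → ∀ t ∈ Set.Icc u (u + 1), 2 ≤ ‖x j t - x k t‖)
    (j : Fin n) :
    {k : Fin n | k ≠ j ∧ ∃ t ∈ Set.Icc u (u + 1), ‖x j t - x k t‖ = 2}.ncard ≤ 5 ^ d := by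
  classical
  have hu : u ∈ Set.Icc u (u + 1) := ⟨le_rfl, by linarith⟩
  set T := {k : Fin n | k ≠ j ∧ ∃ t ∈ Set.Icc u (u + 1), ‖x j t - x k t‖ = 2}
  have near_at_start : ∀ k ∈ T.toFinset, ‖x k u - x j u‖ ≤ 2 * 2 := by
    intro k hk
    obtain ⟨-, t, ht, htouch⟩ := Set.mem_toFinset.1 hk
    have hut : |u - t| ≤ 1 := abs_le.2 ⟨by linarith [ht.2], by linarith [ht.1]⟩
    have hdrift := norm_sub_le_norm_sub_add_two_mul (hlip k u hu t ht) (hlip j t ht u hu)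
    rw [norm_sub_rev (x k t), htouch] at hdrift
    linarith
  have hcard := card_le_five_pow_finrank_of_separated _ (fun k => x k u) (x j u) two_pos
    near_at_start fun k _ l _ hkl => hsep k l hkl u hu
  rwa [finrank_euclideanSpace_fin, ← Set.ncard_eq_toFinset_card'] at hcard

/-- **Step 2 of the proof of Theorem 1.1 (per-ball version).** If `n` unit
balls move with speeds at most 1 (centers `1`-Lipschitz) during a unit time
interval and never overlap, then a given ball can touch at most `5^d` other
balls during that interval. -/
theorem touching_balls_in_unit_time (d n : ℕ) (hd : 1 ≤ d) (hn : 1 ≤ n) (u : ℝ)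
    (x : Fin n → ℝ → EuclideanSpace ℝ (Fin d))
    (hlip : ∀ j, ∀ s ∈ Set.Icc u (u + 1), ∀ t ∈ Set.Icc u (u + 1),
      ‖x j s - x j t‖ ≤ |s - t|)
    (hsep : ∀ j k, j ≠ k → ∀ t ∈ Set.Icc u (u + 1), 2 ≤ ‖x j t - x k t‖)
    (j : Fin n) :
    {k : Fin n | k ≠ j ∧ ∃ t ∈ Set.Icc u (u + 1), ‖x j t - x k t‖ = 2}.ncard ≤ 5 ^ d :=
  touching_balls_in_unit_time_general d n u x hlip hsep j
end

section
/- Let n ≥ 2, let x_1, …, x_n be points in a metric space, and let γ > 0 be such that max_{1 ≤ j,k ≤ n} dist(x_j, x_k) > (n − 1)γ. Then there is a partition of {1, …, n} into two nonempty sets S and T such that dist(x_j, x_k) > γ for all j ∈ S and k ∈ T. -/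
/-!
Join two indices when their points are within `γ`. Along a path in this graph the distance grows
by at most `γ` per edge, and a path has fewer than `n` edges, so points in one connected component
are within `(n - 1)γ` of each other. Hence the two points at distance more than `(n - 1)γ` lie in
different components, and the component of one of them versus the rest is the required splitting.
-/

section

variable {V X : Type*} [PseudoMetricSpace X] {G : SimpleGraph V} {f : V → X} {γ : ℝ}

theorem dist_le_walk_length_mul (hG : ∀ a b, G.Adj a b → dist (f a) (f b) ≤ γ)
    {u v : V} (p : G.Walk u v) : dist (f u) (f v) ≤ p.length * γ := by
  induction p with
  | nil => simp
  | @cons a b c hab q ih =>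
    calc dist (f a) (f c) ≤ dist (f a) (f b) + dist (f b) (f c) := dist_triangle _ _ _
      _ ≤ γ + q.length * γ := add_le_add (hG a b hab) ih
      _ = (q.cons hab).length * γ := by rw [SimpleGraph.Walk.length_cons]; push_cast; ring

theorem dist_le_card_sub_one_mul_of_reachable [Fintype V] (hγ : 0 ≤ γ)
    (hG : ∀ a b, G.Adj a b → dist (f a) (f b) ≤ γ) {u v : V} (h : G.Reachable u v) :
    dist (f u) (f v) ≤ ((Fintype.card V : ℝ) - 1) * γ := by
  obtain ⟨p, hp⟩ := h.exists_isPath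
  have hlen : (p.length : ℝ) ≤ (Fintype.card V : ℝ) - 1 :=
    le_sub_iff_add_le.2 (by exact_mod_cast hp.length_lt)
  exact (dist_le_walk_length_mul hG p).trans (mul_le_mul_of_nonneg_right hlen hγ)

def closeGraph (f : V → X) (γ : ℝ) : SimpleGraph V where
  Adj a b := a ≠ b ∧ dist (f a) (f b) ≤ γ
  symm := ⟨fun _ _ h => ⟨h.1.symm, dist_comm (f _) (f _) ▸ h.2⟩⟩
  loopless := ⟨fun _ h => h.1 rfl⟩

theorem closeGraph_adj {a b : V} :
    (closeGraph f γ).Adj a b ↔ a ≠ b ∧ dist (f a) (f b) ≤ γ :=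
  Iff.rfl

theorem lt_dist_of_reachable_of_not_reachable {u a b : V} (ha : (closeGraph f γ).Reachable u a)
    (hb : ¬(closeGraph f γ).Reachable u b) : γ < dist (f a) (f b) := by
  by_contra! hab
  rcases eq_or_ne a b with rfl | hne
  · exact hb ha
  · exact hb (ha.trans ((closeGraph_adj.2 ⟨hne, hab⟩).reachable))

end

theorem splitting_of_spread_points_general {X : Type*} [MetricSpace X] (n : ℕ)
    (x : Fin n → X) (γ : ℝ) (hγ : 0 < γ)
    (h : ∃ j k : Fin n, ((n : ℝ) - 1) * γ < dist (x j) (x k)) :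
    ∃ S T : Set (Fin n), S.Nonempty ∧ T.Nonempty ∧ S ∪ T = Set.univ ∧ S ∩ T = ∅ ∧
      ∀ j ∈ S, ∀ k ∈ T, γ < dist (x j) (x k) := by
  obtain ⟨j, k, hjk⟩ := h
  set S := {i | (closeGraph x γ).Reachable j i}
  have hk : k ∉ S := fun hreach => by
    have := dist_le_card_sub_one_mul_of_reachable hγ.le
      (fun _ _ hab => (closeGraph_adj.1 hab).2) hreach
    rw [Fintype.card_fin] at this
    linarith
  exact ⟨S, Sᶜ, ⟨j, .refl j⟩, ⟨k, hk⟩, Set.union_compl_self S, Set.inter_compl_self S,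
    fun _ ha _ hb => lt_dist_of_reachable_of_not_reachable ha hb⟩

/-- **Chain/splitting lemma (Step 5 of the proof of Theorem 1.1).** If the
maximal pairwise distance of `n ≥ 2` points in a metric space exceeds
`(n−1)γ`, the index set splits into two nonempty parts with all cross
distances greater than `γ`. -/
theorem splitting_of_spread_points {X : Type*} [MetricSpace X] (n : ℕ) (hn : 2 ≤ n)
    (x : Fin n → X) (γ : ℝ) (hγ : 0 < γ)
    (h : ∃ j k : Fin n, ((n : ℝ) - 1) * γ < dist (x j) (x k)) :
    ∃ S T : Set (Fin n), S.Nonempty ∧ T.Nonempty ∧ S ∪ T = Set.univ ∧ S ∩ T = ∅ ∧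
      ∀ j ∈ S, ∀ k ∈ T, γ < dist (x j) (x k) :=
  splitting_of_spread_points_general n x γ hγ h
end
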